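/- O(1/k) last-iterate rate of EAG: under the assumptions of the EAG potential lemma (F monotone L-Lipschitz, T 3-cyclically monotone with zer(F+T) ∋ x⋆, τ_k = 1/(k+2), η ∈ (0, 1/L]), the iterates satisfy ‖F x^k + ξ^k‖² ≤ (4‖x⁰ - x⋆‖² + 2η²‖F x⁰ + ξ⁰‖²)/(η²(k+1)²) for all k ≥ 0, where ξ^k ∈ T x^k is the element produced by the resolvent step. -/

import Mathlib

/-!
With `w k = F (x k) + ξ k`, the potential `V k = η (k+1)²/2 ‖w k‖² + (k+1) ⟪w k, x k - x 0⟫`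
is nonincreasing: `V k - V (k+1)` is an explicit sum of the monotonicity term of `F`, the
Lipschitz slack `‖y k - x (k+1)‖² - η² ‖F (y k) - F (x (k+1))‖²`, the 3-cyclic monotonicity term
of `T` at `x k, y k, x (k+1)`, and a square. Since `⟪w k, x k - x⋆⟫ ≥ 0`, Cauchy–Schwarz bounds
`V k` below by `η (k+1)²/2 ‖w k‖² - (k+1) ‖w k‖ ‖x 0 - x⋆‖`, and `V k ≤ V 0 = η/2 ‖w 0‖²`
is then a quadratic inequality in `η (k+1) ‖w k‖`.
-/

open scoped RealInnerProductSpace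

section Potential

variable {E : Type*} [NormedAddCommGroup E] [InnerProductSpace ℝ E]

noncomputable def eagPotential (η : ℝ) (x₀ : E) (κ : ℝ) (w x : E) : ℝ :=
  η * (κ + 1) ^ 2 / 2 * ‖w‖ ^ 2 + (κ + 1) * ⟪w, x - x₀⟫

theorem eagPotential_sub_eagPotential_add_one {η κ : ℝ} (hη : η ≠ 0) (hκ : κ + 2 ≠ 0)
    {A P Q R fp fq fr u v s : E}
    (hQ : Q = (1 / (κ + 2)) • A + (1 - 1 / (κ + 2)) • P - (η * (1 - 1 / (κ + 2))) • (fp + v))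
    (hR : R = (1 / (κ + 2)) • A + (1 - 1 / (κ + 2)) • P - η • (fq + s)) :
    eagPotential η A κ (fp + u) P - eagPotential η A (κ + 1) (fr + s) R
      = (κ + 1) * (κ + 2) * ⟪fp - fr, P - R⟫
        + (κ + 2) ^ 2 / (2 * η) * (‖Q - R‖ ^ 2 - η ^ 2 * ‖fq - fr‖ ^ 2)
        + (κ + 1) * (κ + 2) * (⟪u, P - Q⟫ + ⟪v, Q - R⟫ + ⟪s, R - P⟫)
        + η * (κ + 1) ^ 2 / 2 * ‖u - v‖ ^ 2 := by
  subst hQ hR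
  simp only [eagPotential, ← real_inner_self_eq_norm_sq, inner_sub_left, inner_sub_right,
    inner_add_left, inner_add_right, real_inner_smul_left, real_inner_smul_right]
  simp only [real_inner_comm]
  field_simp
  ring

theorem eagPotential_add_one_le {η κ : ℝ} (hη : 0 < η) (hκ : 0 ≤ κ)
    {A P Q R fp fq fr u v s : E}
    (hQ : Q = (1 / (κ + 2)) • A + (1 - 1 / (κ + 2)) • P - (η * (1 - 1 / (κ + 2))) • (fp + v))
    (hR : R = (1 / (κ + 2)) • A + (1 - 1 / (κ + 2)) • P - η • (fq + s))
    (hmono : 0 ≤ ⟪fp - fr, P - R⟫) (hLip : η * ‖fq - fr‖ ≤ ‖Q - R‖)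
    (hcyc : 0 ≤ ⟪u, P - Q⟫ + ⟪v, Q - R⟫ + ⟪s, R - P⟫) :
    eagPotential η A (κ + 1) (fr + s) R ≤ eagPotential η A κ (fp + u) P := by
  have hslack : 0 ≤ ‖Q - R‖ ^ 2 - η ^ 2 * ‖fq - fr‖ ^ 2 := by
    rw [sub_nonneg, ← mul_pow]
    exact pow_le_pow_left₀ (by positivity) hLip 2
  rw [← sub_nonneg, eagPotential_sub_eagPotential_add_one hη.ne' (by linarith) hQ hR]
  positivity

theorem sq_le_of_sq_sub_two_mul_le {s d c : ℝ} (h : s ^ 2 - 2 * s * d ≤ c) :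
    s ^ 2 ≤ 4 * d ^ 2 + 2 * c := by
  nlinarith [sq_nonneg (s - 2 * d)]

theorem norm_sq_le_of_eagPotential_le {η κ G : ℝ} {x₀ xs w x : E} (hη : 0 < η) (hκ : 0 ≤ κ)
    (hw : 0 ≤ ⟪w, x - xs⟫) (hV : eagPotential η x₀ κ w x ≤ η / 2 * G ^ 2) :
    ‖w‖ ^ 2 ≤ (4 * ‖x₀ - xs‖ ^ 2 + 2 * η ^ 2 * G ^ 2) / (η ^ 2 * (κ + 1) ^ 2) := by
  have hCS : -(‖w‖ * ‖x₀ - xs‖) ≤ ⟪w, x - x₀⟫ := by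
    have hsplit : ⟪w, x - x₀⟫ = ⟪w, x - xs⟫ - ⟪w, x₀ - xs⟫ := by
      rw [← inner_sub_right, sub_sub_sub_cancel_right]
    linarith [real_inner_le_norm w (x₀ - xs)]
  have hquad : (η * (κ + 1) * ‖w‖) ^ 2 - 2 * (η * (κ + 1) * ‖w‖) * ‖x₀ - xs‖
      ≤ η ^ 2 * G ^ 2 := by
    unfold eagPotential at hV
    nlinarith [mul_le_mul_of_nonneg_left hCS (by linarith : 0 ≤ κ + 1)]
  rw [le_div_iff₀ (by positivity)]
  linarith [sq_le_of_sq_sub_two_mul_le hquad]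

theorem inner_add_sub_nonneg_of_add_eq_zero {F : E → E} {T : E → Set E}
    (hmono : ∀ x y, 0 ≤ ⟪F x - F y, x - y⟫)
    (h3 : ∀ x1 u1 x2 u2 x3 u3, u1 ∈ T x1 → u2 ∈ T x2 → u3 ∈ T x3 →
      0 ≤ ⟪u1, x1 - x2⟫ + ⟪u2, x2 - x3⟫ + ⟪u3, x3 - x1⟫)
    {x ξ xs ξs : E} (hξ : ξ ∈ T x) (hξs : ξs ∈ T xs) (hzero : F xs + ξs = 0) :
    0 ≤ ⟪F x + ξ, x - xs⟫ := by
  have hT := h3 x ξ xs ξs xs ξs hξ hξs hξs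
  have hsplit : ⟪F x + ξ, x - xs⟫ = ⟪F x - F xs, x - xs⟫ + ⟪ξ - ξs, x - xs⟫ := by
    rw [← inner_add_left, eq_neg_of_add_eq_zero_left hzero]
    congr 1
    abel
  rw [sub_self, inner_zero_right, add_zero, ← neg_sub x xs, inner_neg_right,
    ← sub_eq_add_neg, ← inner_sub_left] at hT
  linarith [hmono x xs]

end Potential

theorem mul_norm_sub_le_norm_sub_of_lipschitz {E : Type*} [SeminormedAddCommGroup E]
    {F : E → E} {L η : ℝ} (hLip : ∀ x y, ‖F x - F y‖ ≤ L * ‖x - y‖) (hη : 0 ≤ η)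
    (hηL : η * L ≤ 1) (a b : E) : η * ‖F a - F b‖ ≤ ‖a - b‖ :=
  calc η * ‖F a - F b‖ ≤ η * (L * ‖a - b‖) := mul_le_mul_of_nonneg_left (hLip a b) hη
    _ = (η * L) * ‖a - b‖ := (mul_assoc _ _ _).symm
    _ ≤ ‖a - b‖ := mul_le_of_le_one_left (norm_nonneg _) hηL

theorem eag_last_iterate_rate_general {p : ℕ}
    (F : EuclideanSpace ℝ (Fin p) → EuclideanSpace ℝ (Fin p))
    (T : EuclideanSpace ℝ (Fin p) → Set (EuclideanSpace ℝ (Fin p)))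
    (L η : ℝ) (hη0 : 0 < η) (hη1 : η ≤ 1 / L)
    (hmono : ∀ x y, 0 ≤ ⟪F x - F y, x - y⟫)
    (hLip : ∀ x y, ‖F x - F y‖ ≤ L * ‖x - y‖)
    (h3 : ∀ x1 u1 x2 u2 x3 u3, u1 ∈ T x1 → u2 ∈ T x2 → u3 ∈ T x3 →
      0 ≤ ⟪u1, x1 - x2⟫ + ⟪u2, x2 - x3⟫ + ⟪u3, x3 - x1⟫)
    (xs ξs : EuclideanSpace ℝ (Fin p)) (hξs : ξs ∈ T xs) (hzero : F xs + ξs = 0)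
    (x y ξ ζ : ℕ → EuclideanSpace ℝ (Fin p))
    (hξ : ∀ k, ξ k ∈ T (x k)) (hζ : ∀ k, ζ k ∈ T (y k))
    (hy : ∀ k : ℕ, y k = (1 / ((k : ℝ) + 2)) • x 0 + (1 - 1 / ((k : ℝ) + 2)) • x k
        - (η * (1 - 1 / ((k : ℝ) + 2))) • (F (x k) + ζ k))
    (hx : ∀ k : ℕ, x (k + 1) = (1 / ((k : ℝ) + 2)) • x 0 + (1 - 1 / ((k : ℝ) + 2)) • x k
        - η • (F (y k) + ξ (k + 1))) :
    ∀ k : ℕ, ‖F (x k) + ξ k‖ ^ 2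
      ≤ (4 * ‖x 0 - xs‖ ^ 2 + 2 * η ^ 2 * ‖F (x 0) + ξ 0‖ ^ 2)
          / (η ^ 2 * ((k : ℝ) + 1) ^ 2) := by
  have hηL : η * L ≤ 1 := by
    have hL : 0 < L := one_div_pos.mp (hη0.trans_le hη1)
    rwa [le_div_iff₀ hL] at hη1
  set V : ℕ → ℝ := fun n ↦ eagPotential η (x 0) n (F (x n) + ξ n) (x n) with hV
  have hVanti : Antitone V := antitone_nat_of_succ_le fun n ↦ by
    simpa only [hV, Nat.cast_succ] using eagPotential_add_one_le hη0 n.cast_nonneg (hy n) (hx n)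
      (hmono _ _) (mul_norm_sub_le_norm_sub_of_lipschitz hLip hη0.le hηL _ _)
      (h3 _ _ _ _ _ _ (hξ n) (hζ n) (hξ (n + 1)))
  have hV0 : V 0 = η / 2 * ‖F (x 0) + ξ 0‖ ^ 2 := by
    simp only [hV, eagPotential, Nat.cast_zero, sub_self, inner_zero_right]
    ring
  intro k
  exact norm_sq_le_of_eagPotential_le hη0 k.cast_nonneg
    (inner_add_sub_nonneg_of_add_eq_zero hmono h3 (hξ k) hξs hzero)
    (hV0 ▸ hVanti k.zero_le)

/-- `O(1/k)` last-iterate rate of the extra-anchored gradient (EAG) method. -/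
theorem eag_last_iterate_rate {p : ℕ}
    (F : EuclideanSpace ℝ (Fin p) → EuclideanSpace ℝ (Fin p))
    (T : EuclideanSpace ℝ (Fin p) → Set (EuclideanSpace ℝ (Fin p)))
    (L η : ℝ) (hL : 0 < L) (hη0 : 0 < η) (hη1 : η ≤ 1 / L)
    (hmono : ∀ x y, 0 ≤ ⟪F x - F y, x - y⟫)
    (hLip : ∀ x y, ‖F x - F y‖ ≤ L * ‖x - y‖)
    (h3 : ∀ x1 u1 x2 u2 x3 u3, u1 ∈ T x1 → u2 ∈ T x2 → u3 ∈ T x3 →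
      0 ≤ ⟪u1, x1 - x2⟫ + ⟪u2, x2 - x3⟫ + ⟪u3, x3 - x1⟫)
    (xs ξs : EuclideanSpace ℝ (Fin p)) (hξs : ξs ∈ T xs) (hzero : F xs + ξs = 0)
    (x y ξ ζ : ℕ → EuclideanSpace ℝ (Fin p))
    (hξ : ∀ k, ξ k ∈ T (x k)) (hζ : ∀ k, ζ k ∈ T (y k))
    (hy : ∀ k : ℕ, y k = (1 / ((k : ℝ) + 2)) • x 0 + (1 - 1 / ((k : ℝ) + 2)) • x k
        - (η * (1 - 1 / ((k : ℝ) + 2))) • (F (x k) + ζ k))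
    (hx : ∀ k : ℕ, x (k + 1) = (1 / ((k : ℝ) + 2)) • x 0 + (1 - 1 / ((k : ℝ) + 2)) • x k
        - η • (F (y k) + ξ (k + 1))) :
    ∀ k : ℕ, ‖F (x k) + ξ k‖ ^ 2
      ≤ (4 * ‖x 0 - xs‖ ^ 2 + 2 * η ^ 2 * ‖F (x 0) + ξ 0‖ ^ 2)
          / (η ^ 2 * ((k : ℝ) + 1) ^ 2) :=
  eag_last_iterate_rate_general F T L η hη0 hη1 hmono hLip h3 xs ξs hξs hzero x y ξ ζ hξ hζ hy hx
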